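/- The sum of the logarithms of the partial distances is invariant under equivalent additions: if K̂ = T·K with T upper triangular unipotent over F_2, then E(K̂) = E(K), where E(M) = (1/l) Σ_i log_l D_i(M). -/
import Mathlib


open Matrix Finset

/-- The "kernel code": the span of rows `i, i+1, ..., l-1` of `K`. -/
def rowSpan {l : ℕ} (K : Matrix (Fin l) (Fin l) (ZMod 2)) (i : ℕ) :
    Submodule (ZMod 2) (Fin l → ZMod 2) :=
  Submodule.span (ZMod 2) {v | ∃ r : Fin l, i ≤ (r : ℕ) ∧ v = K r}

/-- The `i`-th partial distance: Hamming distance from row `i` to the span of later rows. -/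
noncomputable def PD {l : ℕ} (K : Matrix (Fin l) (Fin l) (ZMod 2)) (i : Fin l) : ℕ :=
  sInf {d | ∃ c ∈ rowSpan K ((i : ℕ) + 1), hammingDist (K i) c = d}

lemma row_mem_rowSpan {l : ℕ} (K : Matrix (Fin l) (Fin l) (ZMod 2)) {m : ℕ} {r : Fin l}
    (h : m ≤ (r : ℕ)) : K r ∈ rowSpan K m :=
  Submodule.subset_span ⟨r, h, rfl⟩

lemma mul_row_eq_sum {l : ℕ} (K T : Matrix (Fin l) (Fin l) (ZMod 2)) (r : Fin l) :
    (T * K) r = ∑ j, T r j • K j := by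
  ext x
  simp [Matrix.mul_apply]

lemma mul_row_mem {l : ℕ} (K T : Matrix (Fin l) (Fin l) (ZMod 2))
    (hT : T.BlockTriangular id) {m : ℕ} {r : Fin l} (h : m ≤ (r : ℕ)) :
    (T * K) r ∈ rowSpan K m := by
  rw [mul_row_eq_sum]
  refine Submodule.sum_mem _ fun j _ => ?_
  by_cases hj : (j : ℕ) < (r : ℕ)
  · rw [hT hj, zero_smul]; exact Submodule.zero_mem _
  · exact Submodule.smul_mem _ _ (row_mem_rowSpan K (h.trans (not_lt.mp hj)))

lemma row_mem_mul_rowSpan {l : ℕ} (K T : Matrix (Fin l) (Fin l) (ZMod 2))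
    (hT : T.BlockTriangular id) (hTd : ∀ i, T i i = 1) :
    ∀ n (r : Fin l), l - (r : ℕ) = n → ∀ m, m ≤ (r : ℕ) → K r ∈ rowSpan (T * K) m := by
  intro n
  induction n using Nat.strong_induction_on with
  | _ n ih =>
    intro r hn m hm
    have hKr : K r = (T * K) r - ∑ j ∈ univ.erase r, T r j • K j := by
      rw [mul_row_eq_sum, ← Finset.add_sum_erase _ _ (mem_univ r), hTd r, one_smul]
      abel
    rw [hKr]
    refine Submodule.sub_mem _ (Submodule.subset_span ⟨r, hm, rfl⟩)
      (Submodule.sum_mem _ fun j hj => ?_)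
    have hjr : j ≠ r := (Finset.mem_erase.mp hj).1
    by_cases hlt : (j : ℕ) < (r : ℕ)
    · rw [hT hlt, zero_smul]; exact Submodule.zero_mem _
    · have hrj : (r : ℕ) < (j : ℕ) :=
        lt_of_le_of_ne (not_lt.mp hlt) (by simpa [Fin.ext_iff] using Ne.symm hjr)
      refine Submodule.smul_mem _ _ (ih (l - (j : ℕ)) ?_ j rfl m (hm.trans hrj.le))
      omega

lemma rowSpan_mul_eq {l : ℕ} (K T : Matrix (Fin l) (Fin l) (ZMod 2))
    (hT : T.BlockTriangular id) (hTd : ∀ i, T i i = 1) (m : ℕ) :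
    rowSpan (T * K) m = rowSpan K m := by
  apply le_antisymm
  · rw [rowSpan, Submodule.span_le]
    rintro v ⟨r, hr, rfl⟩
    exact mul_row_mem K T hT hr
  · rw [rowSpan, Submodule.span_le]
    rintro v ⟨r, hr, rfl⟩
    exact row_mem_mul_rowSpan K T hT hTd _ r rfl m hr

lemma PD_mul_eq {l : ℕ} (K T : Matrix (Fin l) (Fin l) (ZMod 2))
    (hT : T.BlockTriangular id) (hTd : ∀ i, T i i = 1) (i : Fin l) :
    PD (T * K) i = PD K i := by
  have hw : (T * K) i - K i ∈ rowSpan K ((i : ℕ) + 1) := by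
    have : (T * K) i - K i = ∑ j ∈ univ.erase i, T i j • K j := by
      rw [mul_row_eq_sum, ← Finset.add_sum_erase _ _ (mem_univ i), hTd i, one_smul]
      abel
    rw [this]
    refine Submodule.sum_mem _ fun j hj => ?_
    have hji : j ≠ i := (Finset.mem_erase.mp hj).1
    by_cases hlt : (j : ℕ) < (i : ℕ)
    · rw [hT hlt, zero_smul]; exact Submodule.zero_mem _
    · have : (i : ℕ) + 1 ≤ (j : ℕ) := by
        have : (i : ℕ) ≠ (j : ℕ) := fun h => hji (Fin.ext h.symm)
        omega
      exact Submodule.smul_mem _ _ (row_mem_rowSpan K this)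
  set w := (T * K) i - K i with hwdef
  have hTKi : (T * K) i = K i + w := by rw [hwdef]; abel
  unfold PD
  rw [rowSpan_mul_eq K T hT hTd]
  congr 1
  ext d
  constructor
  · rintro ⟨c, hc, rfl⟩
    refine ⟨c - w, Submodule.sub_mem _ hc hw, ?_⟩
    rw [hTKi, hammingDist_eq_hammingNorm, hammingDist_eq_hammingNorm]
    congr 1
    abel
  · rintro ⟨c, hc, rfl⟩
    refine ⟨c + w, Submodule.add_mem _ hc hw, ?_⟩
    rw [hTKi, hammingDist_eq_hammingNorm, hammingDist_eq_hammingNorm]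
    congr 1
    abel

theorem stmt13 {l : ℕ} (hl : 1 < l) (K T : Matrix (Fin l) (Fin l) (ZMod 2))
    (hK : IsUnit K) (hT : T.BlockTriangular id) (hTd : ∀ i, T i i = 1) :
    (1 / (l : ℝ)) * ∑ i, Real.log (PD (T * K) i : ℝ) / Real.log (l : ℝ) =
      (1 / (l : ℝ)) * ∑ i, Real.log (PD K i : ℝ) / Real.log (l : ℝ) := by
  simp [PD_mul_eq K T hT hTd]
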